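/- (Existence lemma) Let Σ ⊆ {T, B, 4, D}, let φ ∈ L_{h,n}, and let ψ be any modal formula. If ψ∧◇φ is KΣ-consistent, then there exists α ∈ C_{h,n} such that ψ∧◇α is KΣ-consistent and ⊢_{KΣ} α→φ. -/

import Mathlib

/-!
Every `α ∈ C_{h,n}` decides every `φ ∈ L_{h,n}`, i.e. `⊢ α → φ` or `⊢ α → ¬φ`. By induction on
`h`: `T̂` decides the atoms `p₀, …, pₙ`, and `α_{S,T}` decides `□χ` because either every `β ∈ S`
implies `χ`, and then `□(∨S)` gives `□χ`, or some `β ∈ S` implies `¬χ`, and then `◇β` gives `¬□χ`.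
Moreover `⊢ ∨C_{h,n}`: the sign patterns of `◇β` over `β ∈ C_{h,n}` and of the atoms over
`p₀, …, pₙ` are exhaustive, and together with `□(∨C_{h,n})` each pair of them implies some
`α_{S,T}`. Hence `⊢ φ → ∨G` for the set `G` of those `α ∈ C_{h,n}` with `⊢ α → φ`, so
`⊢ ◇φ → ∨_{α ∈ G} ◇α`, and consistency of `ψ ∧ ◇φ` forces that of some `ψ ∧ ◇α` with `α ∈ G`.

Propositional reasoning is done semantically, through completeness of the Hilbert system for
tautologies in which boxed formulas are atoms (Kalmár's argument).
-/

namespace ModalSOA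

/-- Modal formulas: propositional variables, propositional constants, ⊥, →, □. -/
inductive Formula : Type
  | var : ℕ → Formula
  | const : ℕ → Formula
  | bot : Formula
  | imp : Formula → Formula → Formula
  | box : Formula → Formula
deriving DecidableEq

namespace Formula

/-- ¬φ := φ → ⊥ -/
def neg (φ : Formula) : Formula := φ.imp bot

/-- ⊤ := ¬⊥ -/
def top : Formula := bot.neg

/-- ◇φ := ¬□¬φ -/
def dia (φ : Formula) : Formula := φ.neg.box.neg

/-- φ ∧ ψ := ¬(φ → ¬ψ) -/
def and (φ ψ : Formula) : Formula := (φ.imp ψ.neg).neg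

/-- φ ∨ ψ := ¬φ → ψ -/
def or (φ ψ : Formula) : Formula := φ.neg.imp ψ

/-- Uniform substitution: substitute formulas for propositional variables,
    leaving propositional constants fixed. -/
def subst (σ : ℕ → Formula) : Formula → Formula
  | var n => σ n
  | const n => const n
  | bot => bot
  | imp φ ψ => imp (φ.subst σ) (ψ.subst σ)
  | box φ => box (φ.subst σ)

end Formula

open Formula

/-- The propositional variable p. -/
def pv : Formula := .var 0
/-- The propositional variable q. -/
def qv : Formula := .var 1
/-- The propositional variable r. -/
def rv : Formula := .var 2

/-- The seven extra modal axioms considered: T, B, 4, 5, D, .2, L. -/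
inductive ModalAxiom : Type
  | T | B | four | five | D | dot2 | L
deriving DecidableEq

/-- The modal formula corresponding to each axiom name. -/
def ModalAxiom.fml : ModalAxiom → Formula
  | .T => pv.box.imp pv                       -- □p → p
  | .B => pv.imp pv.dia.box                   -- p → □◇p
  | .four => pv.box.imp pv.box.box            -- □p → □□p
  | .five => pv.dia.imp pv.dia.box            -- ◇p → □◇p
  | .D => pv.box.imp pv.dia                   -- □p → ◇p
  | .dot2 => pv.box.dia.imp pv.dia.box        -- ◇□p → □◇p
  | .L => (pv.box.imp pv).box.imp pv.box      -- □(□p→p) → □p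

/-- Hilbert-style provability for the normal modal logic with extra axioms `Ax`:
classical propositional axioms, K, members of `Ax`, modus ponens, necessitation,
and uniform substitution. -/
inductive Prv (Ax : Set Formula) : Formula → Prop
  | ax1 : Prv Ax (pv.imp (qv.imp pv))
  | ax2 : Prv Ax ((pv.imp (qv.imp rv)).imp ((pv.imp qv).imp (pv.imp rv)))
  | ax3 : Prv Ax ((pv.neg.imp qv.neg).imp (qv.imp pv))
  | axK : Prv Ax ((pv.imp qv).box.imp (pv.box.imp qv.box))
  | extra {φ} : φ ∈ Ax → Prv Ax φ
  | mp {φ ψ} : Prv Ax (φ.imp ψ) → Prv Ax φ → Prv Ax ψ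
  | nec {φ} : Prv Ax φ → Prv Ax φ.box
  | subst {φ} (σ : ℕ → Formula) : Prv Ax φ → Prv Ax (φ.subst σ)

/-- The axiom set of the logic KΣ. -/
def KAxioms (Sig : Set ModalAxiom) : Set Formula := ModalAxiom.fml '' Sig

/-- The axiom set of GL = K{L}. -/
def GLAx : Set Formula := KAxioms {ModalAxiom.L}

/-- Conjunction of a list of formulas (empty conjunction is ⊤). -/
def listConj : List Formula → Formula
  | [] => top
  | [φ] => φ
  | φ :: ψ :: l => φ.and (listConj (ψ :: l))

/-- Disjunction of a list of formulas (empty disjunction is ⊥). -/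
def listDisj : List Formula → Formula
  | [] => bot
  | [φ] => φ
  | φ :: ψ :: l => φ.or (listDisj (ψ :: l))

/-- Pbl(Γ, φ): there are ψ₁,…,ψₙ ∈ Γ with ⊢ (ψ₁∧…∧ψₙ) → φ. -/
def Pbl (Ax : Set Formula) (Γ : Set Formula) (φ : Formula) : Prop :=
  ∃ l : List Formula, (∀ ψ ∈ l, ψ ∈ Γ) ∧ Prv Ax ((listConj l).imp φ)

/-- A formula φ is consistent if ⊬ φ → ⊥. -/
def FmlConsistent (Ax : Set Formula) (φ : Formula) : Prop := ¬ Prv Ax (φ.imp bot)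

/-- A set Γ is consistent if ¬Pbl(Γ, ⊥). -/
def SetConsistent (Ax : Set Formula) (Γ : Set Formula) : Prop := ¬ Pbl Ax Γ bot

/-- Γ is maximally consistent: consistent, closed under deduction, and for
every φ, φ ∈ Γ or ¬φ ∈ Γ. -/
def MaxConsistent (Ax : Set Formula) (Γ : Set Formula) : Prop :=
  SetConsistent Ax Γ ∧ (∀ φ, Pbl Ax Γ φ → φ ∈ Γ) ∧ (∀ φ, φ ∈ Γ ∨ φ.neg ∈ Γ)

/-- Euclidean relation. -/
def Euclidean {W : Type*} (R : W → W → Prop) : Prop := ∀ ⦃x y z⦄, R x y → R x z → R y z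

/-- Serial relation. -/
def Serial {W : Type*} (R : W → W → Prop) : Prop := ∀ x, ∃ y, R x y

/-- Directed relation. -/
def Directed {W : Type*} (R : W → W → Prop) : Prop :=
  ∀ ⦃x y z⦄, R x y → R x z → ∃ s, R y s ∧ R z s

/-- No infinite ascending R-sequence. -/
def NoInfiniteAscent {W : Type*} (R : W → W → Prop) : Prop :=
  ¬ ∃ f : ℕ → W, ∀ n, R (f n) (f (n + 1))

/-- A frame (with relation R) is appropriate to a given modal axiom. -/
def AppropriateTo {W : Type*} (R : W → W → Prop) : ModalAxiom → Prop
  | .T => Reflexive R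
  | .B => Symmetric R
  | .four => Transitive R
  | .five => Euclidean R
  | .D => Serial R
  | .dot2 => Directed R
  | .L => Transitive R ∧ NoInfiniteAscent R

/-- A frame is appropriate to Σ if it is appropriate to each member of Σ. -/
def Appropriate {W : Type*} (R : W → W → Prop) (Sig : Set ModalAxiom) : Prop :=
  ∀ a ∈ Sig, AppropriateTo R a

/-- A valuation on a frame: truth values for all formulas, respecting the
Kripke clauses for ⊥, →, □. -/
structure Valuation {W : Type*} (R : W → W → Prop) where
  val : W → Formula → Bool
  val_bot : ∀ w, val w Formula.bot = false
  val_imp : ∀ w φ ψ, val w (φ.imp ψ) = (!(val w φ) || val w ψ)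
  val_box : ∀ w φ, val w φ.box = true ↔ ∀ v, R w v → val v φ = true

/-- F ⊩ φ : every valuation on the frame makes φ true at every world. -/
def FrameForces {W : Type*} (R : W → W → Prop) (φ : Formula) : Prop :=
  ∀ V : Valuation R, ∀ w : W, V.val w φ = true

/-- Height of a formula. -/
def ht : Formula → ℕ
  | .imp φ ψ => max (ht φ) (ht ψ)
  | .box φ => 1 + ht φ
  | _ => 0

/-- Order of a formula, with respect to the fixed enumeration `atom` of
atomic formulas. -/
def ord : Formula → ℕ
  | .bot => 0
  | .var k => 2 * k + 1
  | .const k => 2 * k + 2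
  | .imp φ ψ => max (ord φ) (ord ψ)
  | .box φ => ord φ

/-- A fixed enumeration p₀, p₁, … of the atomic formulas (⊥, variables and
constants), with `ord (atom n) = n`. -/
def atom : ℕ → Formula
  | 0 => .bot
  | n + 1 => if n % 2 = 0 then .var (n / 2) else .const (n / 2)

/-- φ ∈ L_{h,n}. -/
def InL (h n : ℕ) (φ : Formula) : Prop := ht φ ≤ h ∧ ord φ ≤ n

/-- T̂ for T ⊆ {p₀,…,pₙ}: the conjunction of the atoms in T and the negations
of the remaining atoms among p₀,…,pₙ. -/
def hatT (n : ℕ) (T : List ℕ) : Formula :=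
  listConj ((List.range (n + 1)).map (fun i => if i ∈ T then atom i else (atom i).neg))

/-- The canonical formula α_{S,T} = (∧_{ψ∈S} ◇ψ) ∧ □(∨S) ∧ T̂. -/
def canonAlpha (n : ℕ) (S : List Formula) (T : List ℕ) : Formula :=
  (listConj (S.map dia)).and (((listDisj S).box).and (hatT n T))

/-- The canonical formulas C_{h,n} (as a finite list). -/
def C : ℕ → ℕ → List Formula
  | 0, n => (List.range (n + 1)).sublists.map (hatT n)
  | h + 1, n => (C h n).sublists.flatMap
      (fun S => (List.range (n + 1)).sublists.map (fun T => canonAlpha n S T))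

/-- ⊕X := ∨_{α∈X}(α ∧ ∧_{β∈X\{α}} ¬β). -/
def bigOplus (X : List Formula) : Formula :=
  listDisj (X.map (fun α => α.and (listConj ((X.filter (· ≠ α)).map neg))))

/-- The set of subformulas of a formula. -/
def sub : Formula → Finset Formula
  | .imp φ ψ => insert (Formula.imp φ ψ) (sub φ ∪ sub ψ)
  | .box φ => insert φ.box (sub φ)
  | a => {a}

/-- (W, R, V) is a weak Kripke model of φ: W nonempty and V satisfies the
valuation clauses for ⊥, →, □ on the subformulas of φ. -/
structure IsWeakKripkeModel (φ : Formula) {W : Type*} (R : W → W → Prop)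
    (V : W → Formula → Bool) : Prop where
  nonempty : Nonempty W
  val_bot : ∀ w, Formula.bot ∈ sub φ → V w Formula.bot = false
  val_imp : ∀ w ψ θ, ψ.imp θ ∈ sub φ → V w (ψ.imp θ) = (!(V w ψ) || V w θ)
  val_box : ∀ w ψ, ψ.box ∈ sub φ → (V w ψ.box = true ↔ ∀ v, R w v → V v ψ = true)

/-- W̃ : the KΣ-consistent α ∈ C_{h+1,n} with ⊢ α → φ. -/
def tildeW (Ax : Set Formula) (φ : Formula) (h n : ℕ) : Set Formula :=
  {α | α ∈ C (h + 1) n ∧ FmlConsistent Ax α ∧ Prv Ax (α.imp φ)}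

/-- α →c β iff α ∧ ◇β is consistent. -/
def relC (Ax : Set Formula) (α β : Formula) : Prop := FmlConsistent Ax (α.and β.dia)

/-- Ṽ(α, ψ) = 1 iff ⊢ α → ψ. -/
noncomputable def tildeV (Ax : Set Formula) (α ψ : Formula) : Bool :=
  @decide _ (Classical.propDecidable (Prv Ax (α.imp ψ)))

-- α′ : the unique consistent member of C_{h,n} provably implied by α.
open Classical in
noncomputable def prime (Ax : Set Formula) (h n : ℕ) (α : Formula) : Formula :=
  if hx : ∃ α', α' ∈ C h n ∧ FmlConsistent Ax α' ∧ Prv Ax (α.imp α') then hx.choose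
  else Formula.bot

/-- α →m β iff ⊢ α → ◇β′ and every ξ ∈ C_{h,n} with ⊢ β → ◇ξ satisfies ⊢ α → ◇ξ. -/
def relM (Ax : Set Formula) (h n : ℕ) (α β : Formula) : Prop :=
  Prv Ax (α.imp (prime Ax h n β).dia) ∧
  ∀ ξ ∈ C h n, Prv Ax (β.imp ξ.dia) → Prv Ax (α.imp ξ.dia)

/-- α →d β (for GL) iff α →m β and some γ ∈ C_{h,n} has ⊢ α → ◇γ and ⊢ β → □¬γ. -/
def relD (h n : ℕ) (α β : Formula) : Prop :=
  relM GLAx h n α β ∧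
  ∃ γ ∈ C h n, Prv GLAx (α.imp γ.dia) ∧ Prv GLAx (β.imp γ.neg.box)


namespace Formula

/-- Classical truth value under `v`, with variables, constants and boxed formulas as atoms. -/
def eval (v : Formula → Bool) : Formula → Bool
  | bot => false
  | imp a b => !(a.eval v) || b.eval v
  | a => v a

def atoms : Formula → List Formula
  | bot => []
  | imp a b => a.atoms ++ b.atoms
  | a => [a]

variable (v : Formula → Bool) (a b : Formula)

@[simp] theorem eval_bot : bot.eval v = false := rfl
@[simp] theorem eval_imp : (a.imp b).eval v = (!(a.eval v) || b.eval v) := rfl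
@[simp] theorem eval_box : a.box.eval v = v a.box := rfl
@[simp] theorem eval_neg : a.neg.eval v = !(a.eval v) := by simp [neg]
@[simp] theorem eval_top : top.eval v = true := by simp [top]
@[simp] theorem eval_or : (a.or b).eval v = (a.eval v || b.eval v) := by simp [Formula.or]
@[simp] theorem eval_and : (a.and b).eval v = (a.eval v && b.eval v) := by
  simp only [Formula.and, eval_neg, eval_imp]
  cases a.eval v <;> cases b.eval v <;> rfl

theorem eval_of_mem_atoms {φ : Formula} (ha : a ∈ φ.atoms) : a.eval v = v a := by
  induction φ with
  | bot => simp [atoms] at ha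
  | imp φ ψ ihφ ihψ => exact (List.mem_append.1 ha).elim ihφ ihψ
  | _ => simp only [atoms, List.mem_singleton] at ha; subst ha; rfl

end Formula

open Formula

variable {Ax : Set Formula}

section Completeness

theorem Prv.ax1_inst (A B : Formula) : Prv Ax (A.imp (B.imp A)) := by
  simpa [Formula.subst, pv, qv] using
    Prv.subst (Ax := Ax) (fun k => if k = 0 then A else B) Prv.ax1

theorem Prv.ax2_inst (A B C : Formula) :
    Prv Ax ((A.imp (B.imp C)).imp ((A.imp B).imp (A.imp C))) := by
  simpa [Formula.subst, pv, qv, rv] using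
    Prv.subst (Ax := Ax) (fun k => if k = 0 then A else if k = 1 then B else C) Prv.ax2

theorem Prv.ax3_inst (A B : Formula) : Prv Ax ((A.neg.imp B.neg).imp (B.imp A)) := by
  simpa [Formula.subst, pv, qv, neg] using
    Prv.subst (Ax := Ax) (fun k => if k = 0 then A else B) Prv.ax3

theorem Prv.axK_inst (A B : Formula) : Prv Ax ((A.imp B).box.imp (A.box.imp B.box)) := by
  simpa [Formula.subst, pv, qv] using
    Prv.subst (Ax := Ax) (fun k => if k = 0 then A else B) Prv.axK

theorem Prv.imp_self (A : Formula) : Prv Ax (A.imp A) :=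
  ((Prv.ax2_inst A (A.imp A) A).mp (Prv.ax1_inst A (A.imp A))).mp (Prv.ax1_inst A A)

inductive Derives (Ax : Set Formula) (Γ : List Formula) : Formula → Prop
  | hyp {φ} : φ ∈ Γ → Derives Ax Γ φ
  | thm {φ} : Prv Ax φ → Derives Ax Γ φ
  | mp {φ ψ} : Derives Ax Γ (φ.imp ψ) → Derives Ax Γ φ → Derives Ax Γ ψ

namespace Derives

variable {Γ : List Formula} {A B : Formula}

theorem imp_intro (h : Derives Ax (A :: Γ) B) : Derives Ax Γ (A.imp B) := by
  induction h with
  | hyp hm =>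
    rcases List.mem_cons.1 hm with rfl | hm
    · exact thm (Prv.imp_self _)
    · exact mp (thm (Prv.ax1_inst _ _)) (hyp hm)
  | thm hp => exact mp (thm (Prv.ax1_inst _ _)) (thm hp)
  | mp _ _ ih₁ ih₂ => exact mp (mp (thm (Prv.ax2_inst _ _ _)) ih₁) ih₂

theorem prv (h : Derives Ax [] A) : Prv Ax A := by
  induction h with
  | hyp hm => simp at hm
  | thm hp => exact hp
  | mp _ _ ih₁ ih₂ => exact ih₁.mp ih₂

end Derives

theorem Prv.not_not_intro (A : Formula) : Prv Ax (A.imp A.neg.neg) := by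
  refine Derives.prv <| Derives.imp_intro <| Derives.imp_intro ?_
  exact (Derives.hyp (φ := A.neg) (by simp)).mp (Derives.hyp (by simp))

theorem Prv.not_not_elim (A : Formula) : Prv Ax (A.neg.neg.imp A) :=
  (Prv.ax3_inst A A.neg.neg).mp (Prv.not_not_intro A.neg)

theorem Derives.by_contra {Γ : List Formula} {A : Formula} (h : Derives Ax (A.neg :: Γ) bot) :
    Derives Ax Γ A :=
  (thm (Prv.not_not_elim A)).mp h.imp_intro

theorem Prv.neg_imp (A B : Formula) : Prv Ax (A.neg.imp (A.imp B)) := by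
  refine Derives.prv <| Derives.imp_intro <| Derives.imp_intro <| Derives.by_contra ?_
  exact (Derives.hyp (φ := A.neg) (by simp)).mp (Derives.hyp (by simp))

theorem Prv.imp_neg_of_neg (A B : Formula) : Prv Ax (A.imp (B.neg.imp (A.imp B).neg)) := by
  refine Derives.prv <| Derives.imp_intro <| Derives.imp_intro <| Derives.imp_intro ?_
  exact (Derives.hyp (φ := B.neg) (by simp)).mp
    ((Derives.hyp (φ := A.imp B) (by simp)).mp (Derives.hyp (by simp)))

theorem Prv.by_cases (A C : Formula) : Prv Ax ((A.imp C).imp ((A.neg.imp C).imp C)) := by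
  refine Derives.prv <| Derives.imp_intro <| Derives.imp_intro <| Derives.by_contra ?_
  have hnA : Derives Ax [C.neg, A.neg.imp C, A.imp C] A.neg :=
    Derives.imp_intro <| (Derives.hyp (φ := C.neg) (by simp)).mp
      ((Derives.hyp (φ := A.imp C) (by simp)).mp (Derives.hyp (by simp)))
  exact (Derives.hyp (φ := C.neg) (by simp)).mp ((Derives.hyp (by simp)).mp hnA)

def signed (v : Formula → Bool) (φ : Formula) : Formula := if φ.eval v then φ else φ.neg

open Derives in
/-- Kalmár's lemma. -/
theorem derives_signed (v : Formula → Bool) {Γ : List Formula} :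
    ∀ {φ : Formula}, (∀ a ∈ φ.atoms, signed v a ∈ Γ) → Derives Ax Γ (signed v φ)
  | bot, _ => by simpa [signed, neg] using thm (Prv.imp_self bot)
  | imp a b, hΓ => by
    have ha := derives_signed v fun x hx => hΓ x (List.mem_append_left _ hx)
    have hb := derives_signed v fun x hx => hΓ x (List.mem_append_right _ hx)
    unfold signed at ha hb ⊢
    cases hva : a.eval v <;> cases hvb : b.eval v <;> simp only [hva, hvb, eval_imp] at ha hb ⊢
    · exact mp (thm (Prv.neg_imp a b)) ha
    · exact mp (thm (Prv.neg_imp a b)) ha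
    · exact mp (mp (thm (Prv.imp_neg_of_neg a b)) ha) hb
    · exact mp (thm (Prv.ax1_inst b a)) hb
  | var _, hΓ | const _, hΓ | box _, hΓ => hyp (hΓ _ (by simp [atoms]))

open Derives in
theorem prv_of_forall_derives_signed {φ : Formula} :
    ∀ l : List Formula, l.Nodup → (∀ a ∈ l, ∀ v, a.eval v = v a) →
      (∀ v, Derives Ax (l.map (signed v)) φ) → Prv Ax φ
  | [], _, _, H => (H fun _ => true).prv
  | a :: l, hnd, hat, H => by
    obtain ⟨hal, hnd⟩ := List.nodup_cons.1 hnd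
    refine prv_of_forall_derives_signed l hnd (fun x hx => hat x (List.mem_cons_of_mem _ hx)) ?_
    intro v
    have hfix (t : Bool) : l.map (signed (Function.update v a t)) = l.map (signed v) := by
      refine List.map_congr_left fun x hx => ?_
      have hxa : x ≠ a := fun h => hal (h ▸ hx)
      simp [signed, hat x (List.mem_cons_of_mem _ hx), hxa]
    have hsign (t : Bool) : signed (Function.update v a t) a = if t then a else a.neg := by
      simp [signed, hat a List.mem_cons_self]
    have htrue := H (Function.update v a true)
    have hfalse := H (Function.update v a false)
    simp only [List.map_cons, hfix, hsign] at htrue hfalse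
    exact mp (mp (thm (Prv.by_cases a φ)) htrue.imp_intro) hfalse.imp_intro

theorem Prv.of_taut {φ : Formula} (h : ∀ v, φ.eval v = true) : Prv Ax φ := by
  refine prv_of_forall_derives_signed φ.atoms.dedup (List.nodup_dedup _)
    (fun a ha v => eval_of_mem_atoms v a (List.mem_dedup.1 ha)) fun v => ?_
  simpa [signed, h v] using derives_signed (Ax := Ax) v (Γ := φ.atoms.dedup.map (signed v))
    fun a ha => List.mem_map_of_mem (List.mem_dedup.2 ha)

theorem Prv.mp_of_taut {A B : Formula} (h : ∀ v, A.eval v = true → B.eval v = true)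
    (hA : Prv Ax A) : Prv Ax B :=
  (Prv.of_taut fun v => by cases hv : A.eval v <;> simp_all).mp hA

theorem Prv.mp₂_of_taut {A B C : Formula}
    (h : ∀ v, A.eval v = true → B.eval v = true → C.eval v = true)
    (hA : Prv Ax A) (hB : Prv Ax B) : Prv Ax C :=
  ((Prv.of_taut fun v => by cases hA : A.eval v <;> cases hB : B.eval v <;> simp_all).mp hA).mp hB

end Completeness

section Propositional

variable {A B C : Formula} {l : List Formula}

theorem Prv.imp_trans (h₁ : Prv Ax (A.imp B)) (h₂ : Prv Ax (B.imp C)) : Prv Ax (A.imp C) :=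
  Prv.mp₂_of_taut (fun v => by simp; grind) h₁ h₂

@[simp] theorem eval_listConj (v : Formula → Bool) :
    ∀ l : List Formula, (listConj l).eval v = l.all (·.eval v)
  | [] => by simp [listConj]
  | [a] => by simp [listConj]
  | a :: b :: l => by simp [listConj, eval_listConj v (b :: l)]

@[simp] theorem eval_listDisj (v : Formula → Bool) :
    ∀ l : List Formula, (listDisj l).eval v = l.any (·.eval v)
  | [] => by simp [listDisj]
  | [a] => by simp [listDisj]
  | a :: b :: l => by simp [listDisj, eval_listDisj v (b :: l)]

theorem Prv.listConj_imp_of_mem (h : A ∈ l) : Prv Ax ((listConj l).imp A) :=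
  Prv.of_taut fun v => by simp; grind

theorem Prv.imp_listDisj_of_mem (h : A ∈ l) : Prv Ax (A.imp (listDisj l)) :=
  Prv.of_taut fun v => by simp; grind

theorem Prv.imp_listConj (H : ∀ ψ ∈ l, Prv Ax (A.imp ψ)) : Prv Ax (A.imp (listConj l)) := by
  induction l with
  | nil => exact Prv.of_taut fun v => by simp
  | cons a l ih =>
    refine Prv.mp₂_of_taut (fun v => ?_) (H a List.mem_cons_self)
      (ih fun ψ hψ => H ψ (List.mem_cons_of_mem _ hψ))
    simp; grind

theorem Prv.listDisj_imp (H : ∀ ψ ∈ l, Prv Ax (ψ.imp A)) : Prv Ax ((listDisj l).imp A) := by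
  induction l with
  | nil => exact Prv.of_taut fun v => by simp
  | cons a l ih =>
    refine Prv.mp₂_of_taut (fun v => ?_) (H a List.mem_cons_self)
      (ih fun ψ hψ => H ψ (List.mem_cons_of_mem _ hψ))
    simp; grind

theorem Prv.of_listDisj_of_listDisj {l₁ l₂ : List Formula} (h₁ : Prv Ax (listDisj l₁))
    (h₂ : Prv Ax (listDisj l₂)) (H : ∀ a ∈ l₁, ∀ b ∈ l₂, Prv Ax ((a.and b).imp A)) :
    Prv Ax A := by
  refine ((Prv.listDisj_imp fun a ha => ?_).mp h₁).mp h₂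
  refine Prv.mp_of_taut (fun v => ?_) (Prv.listDisj_imp fun b hb =>
    Prv.mp_of_taut (B := b.imp (a.imp A)) (fun v => ?_) (H a ha b hb))
  all_goals simp; grind

end Propositional

section Modal

variable {A B : Formula}

theorem Prv.box_mono (h : Prv Ax (A.imp B)) : Prv Ax (A.box.imp B.box) :=
  (Prv.axK_inst A B).mp h.nec

theorem Prv.dia_mono (h : Prv Ax (A.imp B)) : Prv Ax (A.dia.imp B.dia) :=
  Prv.mp_of_taut (fun v => by simp [dia]; grind) (Prv.box_mono (B := A.neg) (A := B.neg)
    (Prv.mp_of_taut (fun v => by simp; grind) h))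

theorem Prv.box_and_imp : Prv Ax ((A.box.and B.box).imp (A.and B).box) := by
  have hpair : Prv Ax (A.imp (B.imp (A.and B))) := Prv.of_taut fun v => by simp; grind
  exact Prv.mp_of_taut (fun v => by simp; grind)
    ((Prv.box_mono hpair).imp_trans (Prv.axK_inst B (A.and B)))

theorem prv_listConj_map_box_imp (l : List Formula) :
    Prv Ax ((listConj (l.map box)).imp (listConj l).box) := by
  induction l with
  | nil =>
    exact Prv.mp_of_taut (fun v => by simp [listConj])
      (Prv.of_taut (φ := top) fun v => by simp).nec
  | cons a l ih =>
    refine Prv.imp_trans ?_ (Prv.box_and_imp (A := a) (B := listConj l) |>.imp_trans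
      (Prv.box_mono (Prv.of_taut fun v => by simp; grind)))
    exact Prv.mp_of_taut (fun v => by simp; grind) ih

theorem prv_dia_listDisj_imp (l : List Formula) :
    Prv Ax ((listDisj l).dia.imp (listDisj (l.map dia))) := by
  have hbox := (prv_listConj_map_box_imp (Ax := Ax) (l.map neg)).imp_trans
    (Prv.box_mono (B := (listDisj l).neg) (Prv.of_taut fun v => by simp; grind))
  exact Prv.mp_of_taut (fun v => by simp [dia]; grind) hbox

end Modal

section Canonical

variable {h n : ℕ}

/-- `hatT n T` is `signPattern atom (List.range (n + 1)) T` by definition. -/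
def signPattern {ι : Type*} [DecidableEq ι] (f : ι → Formula) (l S : List ι) : Formula :=
  listConj (l.map fun x => if x ∈ S then f x else (f x).neg)

theorem prv_listDisj_signPattern {ι : Type*} [DecidableEq ι] (f : ι → Formula) (l : List ι) :
    Prv Ax (listDisj (l.sublists.map (signPattern f l))) := by
  refine Prv.of_taut fun v => ?_
  simp only [eval_listDisj, List.any_map, List.any_eq_true, List.mem_sublists]
  refine ⟨l.filter fun x => (f x).eval v, List.filter_sublist, ?_⟩
  simp only [Function.comp, signPattern, eval_listConj, List.all_map, List.all_eq_true]
  intro x hx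
  by_cases hfx : (f x).eval v <;> simp [hx, hfx]

theorem mem_C_succ {α : Formula} : α ∈ C (h + 1) n ↔
    ∃ S ∈ (C h n).sublists, ∃ T ∈ (List.range (n + 1)).sublists, canonAlpha n S T = α := by
  simp [C]

theorem prv_signPattern_and_hatT_imp_canonAlpha {L S : List Formula} (hS : S.Sublist L)
    (hL : Prv Ax (listDisj L).box) (T : List ℕ) :
    Prv Ax (((signPattern dia L S).and (hatT n T)).imp (canonAlpha n S T)) := by
  set P := signPattern dia L S
  set N := (L.filter (· ∉ S)).map neg
  have hP {x : Formula} (hx : x ∈ L) : Prv Ax (P.imp (if x ∈ S then x.dia else x.dia.neg)) :=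
    Prv.listConj_imp_of_mem (List.mem_map_of_mem hx)
  have hdia : Prv Ax (P.imp (listConj (S.map dia))) := by
    refine Prv.imp_listConj fun ψ hψ => ?_
    obtain ⟨x, hx, rfl⟩ := List.mem_map.1 hψ
    simpa [hx] using hP (hS.subset hx)
  have hboxes : Prv Ax (P.imp (listConj (N.map box))) := by
    refine Prv.imp_listConj fun ψ hψ => ?_
    obtain ⟨x, hx, rfl⟩ := List.mem_map.1 (List.map_map ▸ hψ)
    obtain ⟨hxL, hxS⟩ := List.mem_filter.1 hx
    have hx' : Prv Ax (P.imp x.dia.neg) := by simpa [of_decide_eq_true hxS] using hP hxL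
    exact hx'.imp_trans (Prv.not_not_elim x.neg.box)
  have hcover : Prv Ax (((listDisj L).and (listConj N)).imp (listDisj S)) :=
    Prv.of_taut fun v => by simp [N]; grind
  have hbox : Prv Ax (P.imp (listDisj S).box) :=
    (Prv.mp₂_of_taut (fun v => by simp; grind) hL
      (hboxes.imp_trans (prv_listConj_map_box_imp N))).imp_trans
      (Prv.box_and_imp.imp_trans (Prv.box_mono hcover))
  exact Prv.mp₂_of_taut (fun v => by simp [canonAlpha]; grind) hdia hbox

theorem prv_listDisj_C (Ax : Set Formula) (n : ℕ) : ∀ h, Prv Ax (listDisj (C h n))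
  | 0 => prv_listDisj_signPattern atom (List.range (n + 1))
  | h + 1 => by
    refine Prv.of_listDisj_of_listDisj (prv_listDisj_signPattern dia (C h n))
      (prv_listDisj_signPattern atom (List.range (n + 1))) ?_
    simp only [List.mem_map]
    rintro _ ⟨S, hS, rfl⟩ _ ⟨T, hT, rfl⟩
    exact (prv_signPattern_and_hatT_imp_canonAlpha (List.mem_sublists.1 hS)
      (prv_listDisj_C Ax n h).nec T).imp_trans
      (Prv.imp_listDisj_of_mem (mem_C_succ.2 ⟨S, hS, T, hT, rfl⟩))

theorem InL.of_box {χ : Formula} (hχ : InL (h + 1) n χ.box) : InL h n χ :=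
  ⟨by have := hχ.1; simp only [ht] at this; omega, hχ.2⟩

theorem not_inL_zero_box {χ : Formula} (hχ : InL 0 n χ.box) : False := by
  have := hχ.1; simp only [ht] at this; omega

def Decides (Ax : Set Formula) (α φ : Formula) : Prop :=
  Prv Ax (α.imp φ) ∨ Prv Ax (α.imp φ.neg)

namespace Decides

variable {α β a b φ : Formula}

theorem bot : Decides Ax α bot := .inr (Prv.of_taut fun v => by simp)

theorem imp (ha : Decides Ax α a) (hb : Decides Ax α b) : Decides Ax α (a.imp b) := by
  rcases hb with hb | hb
  · exact .inl (Prv.mp_of_taut (fun v => by simp; grind) hb)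
  rcases ha with ha | ha
  · exact .inr (Prv.mp₂_of_taut (fun v => by simp; grind) ha hb)
  · exact .inl (Prv.mp_of_taut (fun v => by simp; grind) ha)

theorem of_imp (h : Prv Ax (α.imp β)) (hd : Decides Ax β φ) : Decides Ax α φ :=
  Or.imp h.imp_trans h.imp_trans hd

end Decides

theorem decides_hatT_atom {i : ℕ} (hi : i ≤ n) (T : List ℕ) :
    Decides Ax (hatT n T) (atom i) := by
  have hi' := List.mem_range.2 (Nat.lt_succ_of_le hi)
  by_cases hiT : i ∈ T
  · exact .inl (Prv.listConj_imp_of_mem (List.mem_map.2 ⟨i, hi', if_pos hiT⟩))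
  · exact .inr (Prv.listConj_imp_of_mem (List.mem_map.2 ⟨i, hi', if_neg hiT⟩))

theorem atom_two_mul_add_one (k : ℕ) : atom (2 * k + 1) = var k := by
  simp [atom]

theorem atom_two_mul_add_two (k : ℕ) : atom (2 * k + 2) = const k := by
  simp [atom, show (2 * k + 1) % 2 = 1 by omega, show (2 * k + 1) / 2 = k by omega]

theorem Decides.of_imp_hatT {α : Formula} {H : ℕ} {T : List ℕ}
    (hT : Prv Ax (α.imp (hatT n T)))
    (hbox : ∀ χ : Formula, InL H n χ.box → Decides Ax α χ.box) :
    ∀ φ, InL H n φ → Decides Ax α φ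
  | .var k, hφ => by
    rw [← atom_two_mul_add_one]
    exact (decides_hatT_atom hφ.2 T).of_imp hT
  | .const k, hφ => by
    rw [← atom_two_mul_add_two]
    exact (decides_hatT_atom hφ.2 T).of_imp hT
  | .bot, _ => Decides.bot
  | .imp a b, ⟨hh, ho⟩ =>
    (of_imp_hatT hT hbox a ⟨le_of_max_le_left hh, le_of_max_le_left ho⟩).imp
      (of_imp_hatT hT hbox b ⟨le_of_max_le_right hh, le_of_max_le_right ho⟩)
  | .box χ, hφ => hbox χ hφ

theorem decides_canonAlpha_box {S : List Formula} {χ : Formula}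
    (hS : ∀ β ∈ S, Decides Ax β χ) (T : List ℕ) :
    Decides Ax (canonAlpha n S T) χ.box := by
  by_cases hall : ∀ β ∈ S, Prv Ax (β.imp χ)
  · refine .inl ((Prv.of_taut fun v => ?_).imp_trans (Prv.box_mono (Prv.listDisj_imp hall)))
    simp [canonAlpha]; grind
  · push Not at hall
    obtain ⟨β, hβ, hβχ⟩ := hall
    have hdia : Prv Ax ((canonAlpha n S T).imp β.dia) :=
      (Prv.of_taut fun v => by simp [canonAlpha]; grind).imp_trans
        (Prv.listConj_imp_of_mem (List.mem_map_of_mem hβ))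
    refine .inr (hdia.imp_trans ((Prv.dia_mono ((hS β hβ).resolve_left hβχ)).imp_trans ?_))
    exact Prv.mp_of_taut (fun v => by simp [dia]; grind) (Prv.box_mono (Prv.not_not_intro χ))

theorem decides_of_mem_C {φ : Formula} :
    ∀ {h : ℕ} {α : Formula}, α ∈ C h n → InL h n φ → Decides Ax α φ
  | 0, α, hα, hφ => by
    obtain ⟨T, -, rfl⟩ := List.mem_map.1 hα
    exact Decides.of_imp_hatT (Prv.imp_self _) (fun χ hχ => (not_inL_zero_box hχ).elim) φ hφ
  | h + 1, α, hα, hφ => by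
    obtain ⟨S, hS, T, -, rfl⟩ := mem_C_succ.1 hα
    refine Decides.of_imp_hatT (T := T) (Prv.of_taut fun v => by simp [canonAlpha]; grind)
      (fun χ hχ => decides_canonAlpha_box (fun β hβ => ?_) T) φ hφ
    exact decides_of_mem_C ((List.mem_sublists.1 hS).subset hβ) hχ.of_box

end Canonical

theorem exists_imp_listDisj_of_decides {L : List Formula} {φ : Formula}
    (hL : Prv Ax (listDisj L)) (hdec : ∀ α ∈ L, Decides Ax α φ) :
    ∃ G ⊆ L, (∀ α ∈ G, Prv Ax (α.imp φ)) ∧ Prv Ax (φ.imp (listDisj G)) := by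
  classical
  set G := L.filter fun α => Prv Ax (α.imp φ)
  refine ⟨G, List.filter_sublist.subset,
    fun α hα => of_decide_eq_true (List.mem_filter.1 hα).2,
    (Prv.listDisj_imp fun α hα => ?_).mp hL⟩
  rcases hdec α hα with hαφ | hαφ
  · have hαG : α ∈ G := List.mem_filter.2 ⟨hα, decide_eq_true hαφ⟩
    exact Prv.mp_of_taut (fun v => by simp; grind) (Prv.imp_listDisj_of_mem hαG)
  · exact Prv.mp_of_taut (fun v => by simp; grind) hαφ

theorem FmlConsistent.exists_and_dia_of_imp_listDisj {ψ φ : Formula} {G : List Formula}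
    (hcons : FmlConsistent Ax (ψ.and φ.dia)) (hG : Prv Ax (φ.imp (listDisj G))) :
    ∃ α ∈ G, FmlConsistent Ax (ψ.and α.dia) := by
  by_contra! hall
  simp only [FmlConsistent, not_not] at hall
  have hdia := (Prv.dia_mono hG).imp_trans (prv_dia_listDisj_imp G)
  refine hcons ((Prv.mp_of_taut (fun v => ?_) hdia).imp_trans
    (Prv.listDisj_imp (l := G.map fun α => ψ.and α.dia) (by simpa using hall)))
  simp; grind

theorem existence_lemma_general (Sig : Set ModalAxiom)
    (h n : ℕ) (φ ψ : Formula) (hφ : InL h n φ)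
    (hcons : FmlConsistent (KAxioms Sig) (ψ.and φ.dia)) :
    ∃ α ∈ C h n,
      FmlConsistent (KAxioms Sig) (ψ.and α.dia) ∧ Prv (KAxioms Sig) (α.imp φ) := by
  obtain ⟨G, hGC, hGφ, hφG⟩ :=
    exists_imp_listDisj_of_decides (prv_listDisj_C _ n h) fun α hα => decides_of_mem_C hα hφ
  obtain ⟨α, hαG, hα⟩ := hcons.exists_and_dia_of_imp_listDisj hφG
  exact ⟨α, hGC hαG, hα, hGφ α hαG⟩

/-- Existence lemma. If ψ ∧ ◇φ is KΣ-consistent with φ ∈ L_{h,n},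
there is α ∈ C_{h,n} with ψ ∧ ◇α consistent and ⊢ α→φ. -/
theorem existence_lemma (Sig : Set ModalAxiom)
    (hSig : Sig ⊆ {ModalAxiom.T, ModalAxiom.B, ModalAxiom.four, ModalAxiom.D})
    (h n : ℕ) (φ ψ : Formula) (hφ : InL h n φ)
    (hcons : FmlConsistent (KAxioms Sig) (ψ.and φ.dia)) :
    ∃ α ∈ C h n,
      FmlConsistent (KAxioms Sig) (ψ.and α.dia) ∧ Prv (KAxioms Sig) (α.imp φ) :=
  existence_lemma_general Sig h n φ ψ hφ hcons

end ModalSOA
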